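/- arXiv:2511.18366 — 2 statements merged into one kernel-verified Lean document; each statement's English description precedes it below -/
import Mathlib

section
/- In the noncommutative symmetric Lagrange series g = ∑_{n≥0} S_n g^n, the coefficient of S^I (for a composition I of n of length p) equals the number of plane rooted trees on n+1 vertices whose sequence of nonzero arities in prefix order is I; in particular g_2 = S_2 + S^{11} and g_3 = S_3 + 2S^{21} + S^{12} + S^{111}. -/
noncomputable section

/-- The free associative algebra over `ℤ` on the noncommuting generators `S_1, S_2, …`
(the letter `n` stands for `S_n`; the letter `0` is never used). -/
abbrev NSym : Type := FreeAlgebra ℤ ℕ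

/-- The series `S_n t^n` (with `S_0 = 1`). -/
def S (n : ℕ) : PowerSeries NSym :=
  if n = 0 then 1 else PowerSeries.monomial n (FreeAlgebra.ι ℤ n)

/-- Identification with the monoid algebra of the free monoid (basis of words `S^I`). -/
def toMA : NSym ≃ₐ[ℤ] MonoidAlgebra ℤ (FreeMonoid ℕ) :=
  FreeAlgebra.equivMonoidAlgebraFreeMonoid

/-- The coefficient of the word `S^I` in an element of the free algebra. -/
def wcoeff (x : NSym) (I : List ℕ) : ℤ := (toMA x).coeff (FreeMonoid.ofList I)

/-- The operator `S_k^{-1}`: it sends the word `S^{i_1 ⋯ i_r}` to `S^{i_1 ⋯ i_{r-1}}` if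
`i_r = k`, and to `0` otherwise. -/
def Sinv (k : ℕ) (x : NSym) : NSym :=
  toMA.symm (Finsupp.sum (toMA x).coeff fun w c =>
    if (FreeMonoid.toList w).getLast? = some k then
      (MonoidAlgebra.single (FreeMonoid.ofList ((FreeMonoid.toList w).dropLast)) c :
        MonoidAlgebra ℤ (FreeMonoid ℕ))
    else 0)

open Classical in
/-- Łukasiewicz words of length `n+1` and sum `n` (Polish codes of plane rooted trees on
`n+1` vertices), encoded as tuples `Fin (n+1) → Fin (n+1)`. -/
noncomputable def lukWords (n : ℕ) : Finset (Fin (n + 1) → Fin (n + 1)) :=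
  Finset.univ.filter fun w =>
    (∑ i, (w i : ℕ)) = n ∧
    ∀ j ∈ Finset.Icc 1 n,
      j ≤ ∑ i ∈ Finset.univ.filter (fun i : Fin (n + 1) => (i : ℕ) < j), (w i : ℕ)

open Classical in
/-- The Łukasiewicz words (Polish tree codes) of length `n+1` and sum `n` whose list of
nonzero entries (arities in prefix order) is the composition `I`. -/
noncomputable def treesWithArities (n : ℕ) (I : List ℕ) :
    Finset (Fin (n + 1) → Fin (n + 1)) :=
  (lukWords n).filter fun w =>
    ((List.ofFn fun i => (w i : ℕ)).filter fun x => x ≠ 0) = I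

/-! ### Auxiliary infrastructure -/

open Classical

section WcoeffLemmas

lemma toMA_iota (n : ℕ) :
    toMA (FreeAlgebra.ι ℤ n) = MonoidAlgebra.single (FreeMonoid.of n) (1:ℤ) := by
  simp [toMA, FreeAlgebra.equivMonoidAlgebraFreeMonoid, MonoidAlgebra.of_apply]

lemma wcoeff_add (x y : NSym) (I : List ℕ) :
    wcoeff (x + y) I = wcoeff x I + wcoeff y I := by
  simp [wcoeff, map_add]

lemma wcoeff_sum {α : Type*} (s : Finset α) (f : α → NSym) (I : List ℕ) :
    wcoeff (∑ a ∈ s, f a) I = ∑ a ∈ s, wcoeff (f a) I := by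
  induction s using Finset.induction with
  | empty => simp [wcoeff]
  | insert _ _ h ih => simp [Finset.sum_insert h, wcoeff_add, ih]

lemma ofList_injective : Function.Injective (FreeMonoid.ofList (α := ℕ)) :=
  fun a b h => by
    have := congrArg FreeMonoid.toList h
    simpa using this

lemma wcoeff_one (I : List ℕ) : wcoeff 1 I = if I = [] then 1 else 0 := by
  have h : toMA 1 = MonoidAlgebra.single (1 : FreeMonoid ℕ) (1:ℤ) := by
    simp [MonoidAlgebra.one_def]
  rw [wcoeff, h, MonoidAlgebra.coeff_single, Finsupp.single_apply]
  by_cases hI : I = []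
  · subst hI; simp
  · rw [if_neg hI, if_neg]
    intro hc
    exact hI (ofList_injective (((show FreeMonoid.ofList [] = (1 : FreeMonoid ℕ) from rfl).trans hc).symm))

lemma wcoeff_zero (I : List ℕ) : wcoeff 0 I = 0 := by simp [wcoeff]

lemma wcoeff_iota_mul (n : ℕ) (x : NSym) (I : List ℕ) :
    wcoeff (FreeAlgebra.ι ℤ n * x) I =
      match I with
      | [] => 0
      | m :: J => if m = n then wcoeff x J else 0 := by
  rw [wcoeff, map_mul, toMA_iota]
  have key : ∀ (J : List ℕ),
      (FreeMonoid.of n * FreeMonoid.ofList J : FreeMonoid ℕ) = FreeMonoid.ofList (n :: J) := by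
    intro J; rfl
  match I with
  | [] =>
    show (MonoidAlgebra.single (FreeMonoid.of n) (1:ℤ) * toMA x).coeff (FreeMonoid.ofList []) = 0
    apply MonoidAlgebra.coeff_single_mul_of_forall_mul_ne
    intro a
    have hne : ¬ (FreeMonoid.of n * a = FreeMonoid.ofList []) := by
      intro hc
      have := congrArg (List.length ∘ FreeMonoid.toList) hc
      simp [FreeMonoid.toList_of_mul] at this
    exact hne
  | m :: J =>
    show (MonoidAlgebra.single (FreeMonoid.of n) (1:ℤ) * toMA x).coeff (FreeMonoid.ofList (m :: J)) =
      if m = n then wcoeff x J else 0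
    by_cases hm : m = n
    · subst hm
      rw [MonoidAlgebra.coeff_single_mul_eq_mul_coeff (m₂ := FreeMonoid.ofList J)]
      · simp [wcoeff]
      · intro a _
        constructor
        · intro h
          have h2 : FreeMonoid.of m * a = FreeMonoid.of m * FreeMonoid.ofList (FreeMonoid.toList a) := rfl
          rw [h2, key] at h
          have := ofList_injective h
          have h3 := congrArg List.tail this
          simp at h3
          rw [← h3]; rfl
        · rintro rfl; exact key _
    · rw [if_neg hm]
      apply MonoidAlgebra.coeff_single_mul_of_forall_mul_ne
      intro a
      have hne : ¬ (FreeMonoid.of n * a = FreeMonoid.ofList (m :: J)) := by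
        intro hc
        have h2 : FreeMonoid.of n * a = FreeMonoid.of n * FreeMonoid.ofList (FreeMonoid.toList a) := rfl
        rw [h2, key] at hc
        have := congrArg List.head? (ofList_injective hc)
        simp at this
        exact hm this.symm
      exact hne

lemma wcoeff_ext {x y : NSym} (h : ∀ I, wcoeff x I = wcoeff y I) : x = y := by
  apply toMA.injective
  ext w
  have := h (FreeMonoid.toList w)
  simpa [wcoeff] using this

end WcoeffLemmas

/-! ### Power series recursions -/

open PowerSeries Finset

lemma coeff_monomial_mul' (a : NSym) (n m : ℕ) (f : PowerSeries NSym) :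
    coeff m (monomial n a * f) =
      if n ≤ m then a * coeff (m - n) f else 0 := by
  rw [PowerSeries.coeff_mul, Finset.Nat.sum_antidiagonal_eq_sum_range_succ_mk]
  have h1 : ∀ k ∈ range (m+1), coeff k (monomial n a) * coeff (m-k) f
      = if k = n then a * coeff (m-k) f else 0 := by
    intro k _
    rw [PowerSeries.coeff_monomial]
    split <;> simp
  rw [Finset.sum_congr rfl h1, Finset.sum_ite_eq' (range (m+1)) n
    (fun k => a * coeff (m-k) f)]
  simp [Nat.lt_succ_iff]

section Recursions
variable (g : PowerSeries NSym)
    (hg : ∀ m : ℕ, PowerSeries.coeff m g =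
      ∑ n ∈ Finset.range (m + 1), PowerSeries.coeff m (S n * g ^ n))

include hg

lemma hgrec : ∀ m : ℕ, coeff m g = (if m = 0 then 1 else 0)
    + ∑ n ∈ Icc 1 m, FreeAlgebra.ι ℤ n * coeff (m - n) (g ^ n) := by
  intro m
  rw [hg m, range_eq_Ico, Finset.sum_eq_sum_Ico_succ_bot (Nat.succ_pos m)]
  congr 1
  · simp [S, pow_zero, mul_one, PowerSeries.coeff_one]
  · have : Finset.Ico 1 (m+1) = Finset.Icc 1 m := rfl
    rw [this]
    apply Finset.sum_congr rfl
    intro n hn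
    simp only [Finset.mem_Icc] at hn
    rw [S, if_neg (by omega), coeff_monomial_mul', if_pos hn.2]

lemma Grec (k d : ℕ) (hk : 1 ≤ k) :
    coeff d (g ^ k) = coeff d (g ^ (k-1))
      + ∑ n ∈ Icc 1 d, FreeAlgebra.ι ℤ n * coeff (d - n) (g ^ (n + k - 1)) := by
  obtain ⟨k', rfl⟩ : ∃ k', k = k' + 1 := ⟨k - 1, by omega⟩
  simp only [Nat.add_sub_cancel]
  have hpow : g ^ (k' + 1) = g * g ^ k' := pow_succ' g k'
  rw [hpow, PowerSeries.coeff_mul, Finset.Nat.sum_antidiagonal_eq_sum_range_succ_mk]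
  have h1 : ∀ e ∈ range (d+1),
      coeff e g * coeff (d-e) (g ^ k')
      = (if e = 0 then coeff (d-e) (g ^ k') else 0)
        + ∑ n ∈ Icc 1 e, FreeAlgebra.ι ℤ n * coeff (e - n) (g ^ n) * coeff (d-e) (g ^ k') := by
    intro e _
    rw [hgrec g hg e, add_mul, Finset.sum_mul, ite_mul, one_mul, zero_mul]
  rw [Finset.sum_congr rfl h1, Finset.sum_add_distrib]
  congr 1
  · rw [Finset.sum_ite_eq' (range (d+1)) 0 (fun e => coeff (d-e) (g ^ k'))]
    simp
  · rw [Finset.sum_comm' (s' := fun n => Icc n d) (t' := Icc 1 d)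
      (by intro e n
          simp only [Finset.mem_range, Finset.mem_Icc]
          omega)]
    apply Finset.sum_congr rfl
    intro n hn
    simp only [Finset.mem_Icc] at hn
    have : Finset.Icc n d = Finset.Ico n (d+1) := rfl
    rw [this, Finset.sum_Ico_eq_sum_range]
    have hrw : ∀ j ∈ range (d + 1 - n),
        FreeAlgebra.ι ℤ n * coeff (n + j - n) (g ^ n) * coeff (d - (n + j)) (g ^ k')
        = FreeAlgebra.ι ℤ n * (coeff j (g ^ n) * coeff ((d - n) - j) (g ^ k')) := by
      intro j _
      have e1 : n + j - n = j := by omega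
      have e2 : d - (n + j) = d - n - j := by omega
      rw [mul_assoc, e1, e2]
    rw [Finset.sum_congr rfl hrw, ← Finset.mul_sum]
    congr 1
    have e3 : n + (k' + 1) - 1 = n + k' := by omega
    rw [e3, pow_add, PowerSeries.coeff_mul, Finset.Nat.sum_antidiagonal_eq_sum_range_succ_mk]
    have : d + 1 - n = (d - n) + 1 := by omega
    rw [this]

end Recursions

/-! ### The counting function `F` -/

def F : ℕ → ℕ → List ℕ → ℤ
  | 0, d, I => if d = 0 ∧ I = [] then 1 else 0
  | (k+1), d, [] => F k d []
  | (k+1), d, (n :: J) =>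
      F k d (n :: J) + if 1 ≤ n ∧ n ≤ d then F (n + k) (d - n) J else 0
termination_by k d I => (d, k)
decreasing_by
  · exact Prod.Lex.right d (Nat.lt_succ_self k)
  · exact Prod.Lex.right d (Nat.lt_succ_self k)
  · exact Prod.Lex.left _ _ (by omega)

section WcoeffG
variable (g : PowerSeries NSym)
    (hg : ∀ m : ℕ, PowerSeries.coeff m g =
      ∑ n ∈ Finset.range (m + 1), PowerSeries.coeff m (S n * g ^ n))
include hg

lemma wcoeff_G : ∀ (d k : ℕ) (I : List ℕ), wcoeff (coeff d (g ^ k)) I = F k d I := by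
  intro d
  induction d using Nat.strong_induction_on with
  | _ d ihd =>
    intro k
    induction k with
    | zero =>
      intro I
      rw [pow_zero, PowerSeries.coeff_one]
      by_cases hd : d = 0
      · subst hd; simp [wcoeff_one, F]
      · rw [if_neg hd, wcoeff_zero]
        simp [F, hd]
    | succ k ihk =>
      intro I
      rw [Grec g hg (k+1) d (by omega)]
      simp only [Nat.add_sub_cancel]
      rw [wcoeff_add, wcoeff_sum]
      have hterm : ∀ n ∈ Icc 1 d,
          wcoeff (FreeAlgebra.ι ℤ n * coeff (d - n) (g ^ (n + (k+1) - 1))) I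
          = match I with
            | [] => 0
            | m :: J => if m = n then wcoeff (coeff (d - n) (g ^ (n + k))) J else 0 := by
        intro n _
        have e : n + (k+1) - 1 = n + k := by omega
        rw [e, wcoeff_iota_mul]
      rw [Finset.sum_congr rfl hterm]
      match I with
      | [] =>
        simp only [Finset.sum_const_zero, add_zero]
        rw [ihk [], show F (k+1) d [] = F k d [] from by rw [F]]
      | m :: J =>
        rw [ihk (m :: J)]
        show F k d (m :: J) + _ = F (k+1) d (m :: J)
        have : F (k+1) d (m :: J)
            = F k d (m :: J) + if 1 ≤ m ∧ m ≤ d then F (m + k) (d - m) J else 0 := by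
          rw [F]
        rw [this]
        congr 1
        rw [Finset.sum_ite_eq (Icc 1 d) m
          (fun n => wcoeff (coeff (d - n) (g ^ (n + k))) J)]
        simp only [Finset.mem_Icc]
        by_cases hm : 1 ≤ m ∧ m ≤ d
        · rw [if_pos hm, if_pos hm, ihd (d - m) (by omega) (m + k) J]
        · rw [if_neg hm, if_neg hm]

end WcoeffG
def isForest (k M : ℕ) (u : List ℕ) : Prop :=
  u.length = M ∧ u.sum + k = M ∧
  (∀ j ∈ Finset.Ico 1 M, j + 1 ≤ k + (u.take j).sum) ∧ (k = 0 → M = 0)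

lemma isForest_cons_iff (k M a : ℕ) (v : List ℕ) (hk : 1 ≤ k) (hM : 1 ≤ M) :
    isForest k M (a :: v) ↔ isForest (k + a - 1) (M - 1) v := by
  unfold isForest
  constructor
  · rintro ⟨h1, h2, h3, -⟩
    simp only [List.length_cons, List.sum_cons] at h1 h2
    refine ⟨by omega, by omega, ?_, ?_⟩
    · intro j hj
      simp only [Finset.mem_Ico] at hj
      have := h3 (j+1) (by simp only [Finset.mem_Ico]; omega)
      rw [List.take_succ_cons, List.sum_cons] at this
      omega
    · intro h0
      by_contra hM2
      have := h3 1 (by simp only [Finset.mem_Ico]; omega)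
      simp at this
      omega
  · rintro ⟨h1, h2, h3, h4⟩
    refine ⟨by simp; omega, by simp; omega, ?_, by omega⟩
    intro j hj
    simp only [Finset.mem_Ico] at hj
    obtain ⟨rfl, hjM⟩ | ⟨j', rfl, hj'⟩ : (j = 1 ∧ 1 < M) ∨ (∃ j', j = j' + 1 ∧ 1 ≤ j') := by
      rcases Nat.eq_or_lt_of_le hj.1 with h | h
      · left; exact ⟨h.symm, h ▸ hj.2⟩
      · right; exact ⟨j - 1, by omega, by omega⟩
    · -- j = 1 case
      simp only [List.take_succ_cons, List.take_zero, List.sum_cons, List.sum_nil]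
      by_cases ha : a = 0
      · subst ha
        by_cases hk1 : k = 1
        · subst hk1
          have := h4 (by omega)
          omega
        · omega
      · omega
    · have := h3 j' (by simp only [Finset.mem_Ico]; omega)
      rw [List.take_succ_cons, List.sum_cons]
      omega

lemma isForest_zero_iff (k : ℕ) (u : List ℕ) :
    isForest k 0 u ↔ k = 0 ∧ u = [] := by
  unfold isForest
  constructor
  · rintro ⟨h1, h2, -, -⟩
    exact ⟨by omega, List.length_eq_zero_iff.1 h1⟩
  · rintro ⟨rfl, rfl⟩
    simp

lemma not_isForest_zero (M : ℕ) (hM : 1 ≤ M) (u : List ℕ) : ¬ isForest 0 M u := by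
  rintro ⟨-, -, -, h4⟩; omega

noncomputable def lists (M B : ℕ) : Finset (List ℕ) :=
  (Finset.univ : Finset (Fin M → Fin B)).image (fun w => List.ofFn fun i => (w i : ℕ))

lemma mem_lists {M B : ℕ} {u : List ℕ} :
    u ∈ lists M B ↔ u.length = M ∧ ∀ x ∈ u, x < B := by
  constructor
  · rintro hu
    simp only [lists, Finset.mem_image] at hu
    obtain ⟨w, -, rfl⟩ := hu
    refine ⟨by simp, ?_⟩
    intro x hx
    simp only [List.mem_ofFn] at hx
    obtain ⟨i, rfl⟩ := hx
    exact (w i).isLt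
  · rintro ⟨hlen, hB⟩
    simp only [lists, Finset.mem_image]
    refine ⟨fun i => ⟨u.getD i 0, ?_⟩, Finset.mem_univ _, ?_⟩
    · rw [List.getD_eq_getElem u 0 (by omega : (i:ℕ) < u.length)]
      exact hB _ (List.getElem_mem _)
    · apply List.ext_getElem (by simp [hlen])
      intro i h1 h2
      simp only [List.getElem_ofFn]
      rw [List.getD_eq_getElem u 0 (by omega)]

open Classical in
noncomputable def forestSet (k d B : ℕ) (I : List ℕ) : Finset (List ℕ) :=
  (lists (d + k) B).filter fun u => isForest k (d + k) u ∧ u.filter (fun x => x ≠ 0) = I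

open Classical in
lemma mem_forestSet {k d B : ℕ} {I u : List ℕ} :
    u ∈ forestSet k d B I ↔
      (u.length = d + k ∧ ∀ x ∈ u, x < B) ∧ isForest k (d + k) u ∧
        u.filter (fun x => x ≠ 0) = I := by
  rw [forestSet, Finset.mem_filter, mem_lists]

-- fiber over head value 0
open Classical in
lemma fiber_zero_card (k d B : ℕ) (hB0 : 0 < B) (I : List ℕ) :
    ((forestSet (k+1) d B I).filter (fun u => u.headI = 0)).card
      = (forestSet k d B I).card := by
  refine Finset.card_bij' (fun u _ => u.tail) (fun v _ => 0 :: v) ?hi ?hj ?li ?ri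
  case hi =>
    intro u hu
    rw [Finset.mem_filter] at hu
    obtain ⟨hu', hhead⟩ := hu
    rw [mem_forestSet] at hu'
    obtain ⟨⟨hlen, hB⟩, hf, hfil⟩ := hu'
    show u.tail ∈ forestSet k d B I
    rw [mem_forestSet]
    rcases u with _ | ⟨a, v⟩
    · exfalso; simp at hlen
    · have ha : a = 0 := hhead
      subst ha
      rw [isForest_cons_iff _ _ _ _ (by omega) (by omega)] at hf
      have e : d + (k + 1) - 1 = d + k := by omega
      have e2 : k + 1 + 0 - 1 = k := by omega
      rw [e, e2] at hf
      simp only [List.tail_cons]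
      simp only [List.length_cons] at hlen
      refine ⟨⟨by omega, fun x hx => hB x (List.mem_cons_of_mem _ hx)⟩, hf, ?_⟩
      simpa using hfil
  case hj =>
    intro v hv
    rw [mem_forestSet] at hv
    obtain ⟨⟨hlen, hB⟩, hf, hfil⟩ := hv
    show (0 :: v) ∈ Finset.filter (fun u => u.headI = 0) (forestSet (k+1) d B I)
    rw [Finset.mem_filter, mem_forestSet]
    have e : d + (k + 1) - 1 = d + k := by omega
    have e2 : k + 1 + 0 - 1 = k := by omega
    refine ⟨⟨⟨by simp [hlen]; omega, ?_⟩, ?_, ?_⟩, rfl⟩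
    · intro x hx
      rcases List.mem_cons.1 hx with rfl | hx
      · exact hB0
      · exact hB x hx
    · rw [isForest_cons_iff _ _ _ _ (by omega) (by omega), e, e2]
      exact hf
    · simpa using hfil
  case li =>
    intro u hu
    rw [Finset.mem_filter] at hu
    obtain ⟨hu', hhead⟩ := hu
    rw [mem_forestSet] at hu'
    obtain ⟨⟨hlen, -⟩, -, -⟩ := hu'
    show 0 :: u.tail = u
    rcases u with _ | ⟨a, v⟩
    · exfalso; simp at hlen
    · have ha : a = 0 := hhead
      subst ha; rfl
  case ri =>
    intro v _; rfl

open Classical in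
lemma fiber_pos_card (k d B a : ℕ) (ha1 : 1 ≤ a) (had : a ≤ d) (haB : a < B) (J : List ℕ) :
    ((forestSet (k+1) d B (a :: J)).filter (fun u => u.headI = a)).card
      = (forestSet (a + k) (d - a) B J).card := by
  have elen : (d - a) + (a + k) = d + k := by omega
  have e : d + (k + 1) - 1 = d + k := by omega
  have e2 : k + 1 + a - 1 = a + k := by omega
  refine Finset.card_bij' (fun u _ => u.tail) (fun v _ => a :: v) ?hi ?hj ?li ?ri
  case hi =>
    intro u hu
    rw [Finset.mem_filter] at hu
    obtain ⟨hu', hhead⟩ := hu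
    rw [mem_forestSet] at hu'
    obtain ⟨⟨hlen, hB⟩, hf, hfil⟩ := hu'
    show u.tail ∈ forestSet (a + k) (d - a) B J
    rw [mem_forestSet]
    rcases u with _ | ⟨a', v⟩
    · exfalso; simp at hlen
    · have ha : a = a' := (hhead : a' = a).symm
      subst ha
      rw [isForest_cons_iff _ _ _ _ (by omega) (by omega), e, e2] at hf
      simp only [List.tail_cons]
      simp only [List.length_cons] at hlen
      have hfil' : List.filter (fun x => decide (x ≠ 0)) v = J := by
        rw [List.filter_cons] at hfil
        have : (decide (a ≠ 0)) = true := by simp; omega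
        rw [this] at hfil
        simpa using hfil
      exact ⟨⟨by omega, fun x hx => hB x (List.mem_cons_of_mem _ hx)⟩, by rw [elen]; exact hf, hfil'⟩
  case hj =>
    intro v hv
    rw [mem_forestSet] at hv
    obtain ⟨⟨hlen, hB⟩, hf, hfil⟩ := hv
    show (a :: v) ∈ Finset.filter (fun u => u.headI = a) (forestSet (k+1) d B (a :: J))
    rw [Finset.mem_filter, mem_forestSet]
    rw [elen] at hlen hf
    refine ⟨⟨⟨by simp; omega, ?_⟩, ?_, ?_⟩, rfl⟩
    · intro x hx
      rcases List.mem_cons.1 hx with rfl | hx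
      · exact haB
      · exact hB x hx
    · rw [isForest_cons_iff _ _ _ _ (by omega) (by omega), e, e2]
      exact hf
    · rw [List.filter_cons]
      have : (decide (a ≠ 0)) = true := by simp; omega
      rw [this, hfil]
      simp
  case li =>
    intro u hu
    rw [Finset.mem_filter] at hu
    obtain ⟨hu', hhead⟩ := hu
    rw [mem_forestSet] at hu'
    obtain ⟨⟨hlen, -⟩, -, -⟩ := hu'
    show a :: u.tail = u
    rcases u with _ | ⟨a', v⟩
    · exfalso; simp at hlen
    · have ha : a = a' := (hhead : a' = a).symm
      subst ha; rfl
  case ri =>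
    intro v _; rfl

open Classical in
lemma fiber_pos_empty (k d B a : ℕ) (ha1 : 1 ≤ a) (I : List ℕ) (hne : I.head? ≠ some a) :
    ((forestSet (k+1) d B I).filter (fun u => u.headI = a)) = ∅ := by
  rw [Finset.eq_empty_iff_forall_notMem]
  intro u hu
  rw [Finset.mem_filter] at hu
  obtain ⟨hu', hhead⟩ := hu
  rw [mem_forestSet] at hu'
  obtain ⟨⟨hlen, -⟩, -, hfil⟩ := hu'
  rcases u with _ | ⟨a', v⟩
  · simp at hlen
  · have ha : a = a' := (hhead : a' = a).symm
    subst ha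
    rw [List.filter_cons] at hfil
    have : (decide (a ≠ 0)) = true := by simp; omega
    rw [this] at hfil
    apply hne
    rw [← hfil]
    rfl

open Classical in
lemma fiber_big_empty (k d B a : ℕ) (had : d < a) (I : List ℕ) :
    ((forestSet (k+1) d B I).filter (fun u => u.headI = a)) = ∅ := by
  rw [Finset.eq_empty_iff_forall_notMem]
  intro u hu
  rw [Finset.mem_filter] at hu
  obtain ⟨hu', hhead⟩ := hu
  rw [mem_forestSet] at hu'
  obtain ⟨⟨hlen, -⟩, hf, -⟩ := hu'
  rcases u with _ | ⟨a', v⟩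
  · simp at hlen
  · have ha : a = a' := (hhead : a' = a).symm
    subst ha
    obtain ⟨-, hsum, -, -⟩ := hf
    simp only [List.sum_cons] at hsum
    omega

open Classical in
lemma forest_card (B : ℕ) : ∀ d, d < B → ∀ k (I : List ℕ),
    ((forestSet k d B I).card : ℤ) = F k d I := by
  intro d
  induction d using Nat.strong_induction_on with
  | _ d ihd =>
    intro hdB k
    induction k with
    | zero =>
      intro I
      by_cases hd : d = 0
      · subst hd
        have hset : forestSet 0 0 B I = if I = [] then {[]} else ∅ := by
          ext u
          rw [mem_forestSet]
          constructor
          · rintro ⟨⟨hlen, -⟩, -, hfil⟩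
            have hu : u = [] := List.length_eq_zero_iff.1 (by simpa using hlen)
            subst hu
            simp at hfil
            simp [← hfil]
          · intro hu
            by_cases hI : I = []
            · subst hI
              simp at hu
              subst hu
              refine ⟨⟨by simp, by simp⟩, ?_, by simp⟩
              exact ⟨rfl, rfl, by simp, fun _ => rfl⟩
            · simp [hI] at hu
        rw [hset]
        by_cases hI : I = [] <;> simp [hI, F]
      · have hset : forestSet 0 d B I = ∅ := by
          rw [Finset.eq_empty_iff_forall_notMem]
          intro u hu
          rw [mem_forestSet] at hu
          exact not_isForest_zero (d + 0) (by omega) u hu.2.1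
        rw [hset]
        simp [F, hd]
    | succ k ihk =>
      intro I
      have hB0 : 0 < B := by omega
      have hstep : (forestSet (k+1) d B I).card
          = ∑ a ∈ Finset.range B, ((forestSet (k+1) d B I).filter (fun u => u.headI = a)).card := by
        apply Finset.card_eq_sum_card_fiberwise
        intro u hu
        rw [Finset.mem_coe, mem_forestSet] at hu
        obtain ⟨⟨hlen, hB⟩, -, -⟩ := hu
        rcases u with _ | ⟨a, v⟩
        · exfalso; simp at hlen
        · simp only [List.headI, Finset.mem_coe, Finset.mem_range]
          exact hB a List.mem_cons_self
      rw [hstep]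
      rw [Finset.range_eq_Ico, Finset.sum_eq_sum_Ico_succ_bot hB0]
      push_cast
      rw [fiber_zero_card k d B hB0 I, ihk I]
      match I with
      | [] =>
        have hz : ∀ a ∈ Finset.Ico 1 B,
            (((forestSet (k+1) d B ([] : List ℕ)).filter (fun u => u.headI = a)).card : ℤ) = 0 := by
          intro a ha
          simp only [Finset.mem_Ico] at ha
          rw [fiber_pos_empty k d B a (by omega) [] (by simp)]
          simp
        rw [Finset.sum_congr rfl hz]
        simp only [Finset.sum_const_zero, add_zero]
        rw [show F (k+1) d [] = F k d [] from by rw [F]]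
      | m :: J =>
        have hz : ∀ a ∈ Finset.Ico 1 B,
            (((forestSet (k+1) d B (m :: J)).filter (fun u => u.headI = a)).card : ℤ)
            = if a = m then (if 1 ≤ m ∧ m ≤ d then F (m + k) (d - m) J else 0) else 0 := by
          intro a ha
          simp only [Finset.mem_Ico] at ha
          by_cases ham : a = m
          · subst ham
            rw [if_pos rfl]
            by_cases had : a ≤ d
            · rw [if_pos ⟨ha.1, had⟩]
              rw [fiber_pos_card k d B a ha.1 had (by omega) J]
              exact ihd (d - a) (by omega) (by omega) (a + k) J
            · rw [if_neg (by omega)]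
              rw [fiber_big_empty k d B a (by omega) (a :: J)]
              simp
          · rw [if_neg ham]
            rw [fiber_pos_empty k d B a (by omega) (m :: J)
              (by simp only [List.head?_cons, Ne, Option.some.injEq]
                  exact fun h => ham h.symm)]
            simp
        rw [Finset.sum_congr rfl hz, Finset.sum_ite_eq' (Finset.Ico 1 B) m
          (fun _ => if 1 ≤ m ∧ m ≤ d then F (m + k) (d - m) J else 0)]
        rw [show F (k+1) d (m :: J)
          = F k d (m :: J) + if 1 ≤ m ∧ m ≤ d then F (m + k) (d - m) J else 0 from by rw [F]]
        congr 1
        simp only [Finset.mem_Ico]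
        split_ifs <;> first | rfl | (exfalso; omega)

lemma take_ofFn_sum {M : ℕ} (f : Fin M → ℕ) (j : ℕ) (hj : j ≤ M) :
    ((List.ofFn f).take j).sum = ∑ i ∈ Finset.univ.filter (fun i : Fin M => (i : ℕ) < j), f i := by
  induction j with
  | zero => simp
  | succ j ih =>
    have hjM : j < M := by omega
    have h1 : ((List.ofFn f).take (j+1)).sum = ((List.ofFn f).take j).sum + f ⟨j, hjM⟩ := by
      rw [List.sum_take_succ _ j (by simp [hjM])]
      congr 1
      simp
    have h2 : Finset.univ.filter (fun i : Fin M => (i : ℕ) < j + 1)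
        = insert (⟨j, hjM⟩ : Fin M) (Finset.univ.filter (fun i : Fin M => (i : ℕ) < j)) := by
      ext i
      simp only [Finset.mem_filter, Finset.mem_univ, true_and, Finset.mem_insert, Fin.ext_iff]
      omega
    rw [h1, h2, Finset.sum_insert (by simp), ih (by omega)]
    ring

open Classical in
lemma tree_mem_iff (n : ℕ) (I : List ℕ) (w : Fin (n+1) → Fin (n+1)) :
    w ∈ treesWithArities n I ↔ (List.ofFn fun i => (w i : ℕ)) ∈ forestSet 1 n (n+1) I := by
  simp only [treesWithArities, lukWords, Finset.mem_filter]
  rw [mem_forestSet]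
  constructor
  · rintro ⟨⟨-, hsum, hpath⟩, hfil⟩
    refine ⟨⟨by simp, ?_⟩, ⟨by simp, ?_, ?_, by omega⟩, hfil⟩
    · intro x hx
      simp only [List.mem_ofFn] at hx
      obtain ⟨i, rfl⟩ := hx
      exact (w i).isLt
    · rw [List.sum_ofFn, hsum]
    · intro j hjm
      rw [Finset.Ico_add_one_right_eq_Icc] at hjm
      rw [take_ofFn_sum _ j (by simp at hjm; omega)]
      have := hpath j hjm
      omega
  · rintro ⟨⟨-, -⟩, ⟨-, hsum, hpath, -⟩, hfil⟩
    rw [List.sum_ofFn] at hsum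
    refine ⟨⟨Finset.mem_univ _, by omega, ?_⟩, hfil⟩
    intro j hjm
    have hj' : j ∈ Finset.Ico 1 (n+1) := by rw [Finset.Ico_add_one_right_eq_Icc]; exact hjm
    have := hpath j hj'
    rw [take_ofFn_sum _ j (by simp at hjm; omega)] at this
    omega

open Classical in
lemma trees_card (n : ℕ) (I : List ℕ) :
    (treesWithArities n I).card = (forestSet 1 n (n+1) I).card := by
  apply Finset.card_bij (fun w _ => List.ofFn fun i => ((w i : ℕ)))
  · intro w hw
    exact (tree_mem_iff n I w).1 hw
  · intro w _ w' _ h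
    funext i
    have := congrArg (fun L => L.getD i 0) h
    simp only [List.getD_eq_getElem _ _ (by simp [i.isLt] : (i:ℕ) < (List.ofFn fun i => ((w i : ℕ))).length),
      List.getD_eq_getElem _ _ (by simp [i.isLt] : (i:ℕ) < (List.ofFn fun i => ((w' i : ℕ))).length)] at this
    simp only [List.getElem_ofFn] at this
    exact Fin.ext (by simpa using this)
  · intro u hu
    have hu' := mem_forestSet.1 hu
    obtain ⟨⟨hlen, hB⟩, -, -⟩ := hu'
    refine ⟨fun i => ⟨u.getD i 0, ?_⟩, ?_, ?_⟩
    · rw [List.getD_eq_getElem u 0 (by omega : (i:ℕ) < u.length)]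
      exact hB _ (List.getElem_mem _)
    · have hofn : (List.ofFn fun i : Fin (n+1) => ((⟨u.getD i 0, by
          rw [List.getD_eq_getElem u 0 (by omega : (i:ℕ) < u.length)]
          exact hB _ (List.getElem_mem _)⟩ : Fin (n+1)) : ℕ)) = u := by
        apply List.ext_getElem (by simp [hlen])
        intro i h1 h2
        simp only [List.getElem_ofFn]
        rw [List.getD_eq_getElem u 0 (by omega)]
      rw [tree_mem_iff, hofn]
      exact hu
    · apply List.ext_getElem (by simp [hlen])
      intro i h1 h2
      simp only [List.getElem_ofFn]
      rw [List.getD_eq_getElem u 0 (by omega)]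

/-! ### Main theorem -/

/-- In the noncommutative symmetric Lagrange series `g = ∑_{n≥0} S_n g^n`,
the coefficient of `S^I` (for a composition `I` of `n`) is the number of plane rooted trees
on `n+1` vertices whose sequence of nonzero arities in prefix order is `I`; in particular
`g_2 = S_2 + S^{11}` and `g_3 = S_3 + 2S^{21} + S^{12} + S^{111}`. -/
theorem lagrange_coeff_trees
    (g : PowerSeries NSym)
    (hg : ∀ m : ℕ, PowerSeries.coeff m g =
      ∑ n ∈ Finset.range (m + 1), PowerSeries.coeff m (S n * g ^ n)) :
    (∀ n : ℕ, 1 ≤ n → ∀ I : List ℕ, (∀ i ∈ I, 1 ≤ i) → I.sum = n →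
      wcoeff (PowerSeries.coeff n g) I = (treesWithArities n I).card) ∧
    PowerSeries.coeff 2 g =
      FreeAlgebra.ι ℤ 2 + FreeAlgebra.ι ℤ 1 * FreeAlgebra.ι ℤ 1 ∧
    PowerSeries.coeff 3 g =
      FreeAlgebra.ι ℤ 3 + 2 * (FreeAlgebra.ι ℤ 2 * FreeAlgebra.ι ℤ 1)
        + FreeAlgebra.ι ℤ 1 * FreeAlgebra.ι ℤ 2
        + FreeAlgebra.ι ℤ 1 * FreeAlgebra.ι ℤ 1 * FreeAlgebra.ι ℤ 1 := by
  have hc0 : coeff 0 g = 1 := by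
    rw [hgrec g hg 0]; simp
  have hcc : constantCoeff g = 1 := by
    rw [← coeff_zero_eq_constantCoeff]; exact hc0
  have hp0 : ∀ k : ℕ, coeff 0 (g ^ k) = 1 := by
    intro k
    rw [coeff_zero_eq_constantCoeff, map_pow, hcc, one_pow]
  have hc1 : coeff 1 g = FreeAlgebra.ι ℤ 1 := by
    rw [hgrec g hg 1, Finset.Icc_self, Finset.sum_singleton]
    norm_num [hp0, hcc, pow_one]
  have h2g : coeff 1 (g ^ 2) = FreeAlgebra.ι ℤ 1 + FreeAlgebra.ι ℤ 1 := by
    rw [Grec g hg 2 1 (by omega), Finset.Icc_self, Finset.sum_singleton]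
    norm_num [hp0, hcc, pow_one, hc1]
  have hIcc2 : Finset.Icc 1 2 = ({1, 2} : Finset ℕ) := by decide
  have hIcc3 : Finset.Icc 1 3 = ({1, 2, 3} : Finset ℕ) := by decide
  have hc2 : coeff 2 g
      = FreeAlgebra.ι ℤ 1 * FreeAlgebra.ι ℤ 1 + FreeAlgebra.ι ℤ 2 := by
    rw [hgrec g hg 2, hIcc2, Finset.sum_insert (by decide), Finset.sum_singleton]
    norm_num [hp0, hcc, pow_one, hc1]
  have hc3 : coeff 3 g
      = FreeAlgebra.ι ℤ 1 * (FreeAlgebra.ι ℤ 1 * FreeAlgebra.ι ℤ 1 + FreeAlgebra.ι ℤ 2)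
        + (FreeAlgebra.ι ℤ 2 * (FreeAlgebra.ι ℤ 1 + FreeAlgebra.ι ℤ 1)
        + FreeAlgebra.ι ℤ 3) := by
    rw [hgrec g hg 3, hIcc3, Finset.sum_insert (by decide), Finset.sum_insert (by decide),
      Finset.sum_singleton]
    norm_num [hp0, hcc, pow_one, hc1, hc2, h2g]
  refine ⟨?_, ?_, ?_⟩
  · intro n hn I _ _
    have h1 : wcoeff (coeff n g) I = F 1 n I := by
      have := wcoeff_G g hg n 1 I
      rwa [pow_one] at this
    have h2 : ((forestSet 1 n (n+1) I).card : ℤ) = F 1 n I :=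
      forest_card (n+1) n (by omega) 1 I
    rw [h1, ← h2, trees_card n I]
  · rw [hc2]; exact add_comm _ _
  · rw [hc3]; noncomm_ring

end
end

section
/- For every n ≥ 1 and every k ≥ 1, applying the operator S_k^{-1} (deleting a final letter S_k) to the degree n+k component g_{n+k} of the noncommutative Lagrange series gives the same element γ_n of degree n, independent of k: g_{n+k} S_k^{-1} = g_{n+1} S_1^{-1} for all k ≥ 1. -/
noncomputable section

namespace Geo
abbrev MA := MonoidAlgebra ℤ (FreeMonoid ℕ)

def sinvMA (k : ℕ) (f : MA) : MA :=
  Finsupp.sum f.coeff fun w c =>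
    if (FreeMonoid.toList w).getLast? = some k then
      (MonoidAlgebra.single (FreeMonoid.ofList ((FreeMonoid.toList w).dropLast)) c : MA)
    else 0

lemma Sinv_def (k : ℕ) (x : NSym) : Sinv k x = toMA.symm (sinvMA k (toMA x)) := rfl

lemma sinvMA_zero_fun (k : ℕ) (w : FreeMonoid ℕ) :
    (if (FreeMonoid.toList w).getLast? = some k then
      (MonoidAlgebra.single (FreeMonoid.ofList ((FreeMonoid.toList w).dropLast)) (0:ℤ) : MA)
    else 0) = 0 := by
  split <;> simp [MonoidAlgebra.single_zero]

lemma sinvMA_single (k : ℕ) (w : FreeMonoid ℕ) (c : ℤ) :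
    sinvMA k (MonoidAlgebra.single w c) =
      if (FreeMonoid.toList w).getLast? = some k then
        (MonoidAlgebra.single (FreeMonoid.ofList ((FreeMonoid.toList w).dropLast)) c : MA)
      else 0 := by
  unfold sinvMA
  rw [MonoidAlgebra.coeff_single]
  exact Finsupp.sum_single_index (sinvMA_zero_fun k w)

lemma sinvMA_add (k : ℕ) (f g : MA) : sinvMA k (f + g) = sinvMA k f + sinvMA k g := by
  unfold sinvMA
  rw [MonoidAlgebra.coeff_add, Finsupp.sum_add_index']
  · exact fun w => sinvMA_zero_fun k w
  · intro w b₁ b₂; split <;> simp [MonoidAlgebra.single_add]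

lemma sinvMA_zero (k : ℕ) : sinvMA k 0 = 0 := by
  unfold sinvMA; simp [MonoidAlgebra.coeff_zero, Finsupp.sum_zero_index]

lemma Sinv_add (k : ℕ) (x y : NSym) : Sinv k (x + y) = Sinv k x + Sinv k y := by
  rw [Sinv_def, Sinv_def, Sinv_def, map_add, sinvMA_add, map_add]

lemma Sinv_zero (k : ℕ) : Sinv k 0 = 0 := by
  rw [Sinv_def, map_zero, sinvMA_zero, map_zero]

end Geo

namespace Geo

lemma sinvMA_mul (k : ℕ) (f g : MA) :
    sinvMA k (f * g) = f * sinvMA k g + (g.coeff 1) • sinvMA k f := by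
  induction f using MonoidAlgebra.induction_linear with
  | zero => simp [sinvMA_zero]
  | add f f' hf hf' =>
      rw [add_mul, sinvMA_add, hf, hf', sinvMA_add, add_mul, smul_add]
      abel
  | single u a =>
    induction g using MonoidAlgebra.induction_linear with
    | zero => simp [sinvMA_zero]
    | add g g' hg hg' =>
        rw [mul_add, sinvMA_add, hg, hg', sinvMA_add, mul_add, MonoidAlgebra.coeff_add, Finsupp.add_apply, add_smul]
        abel
    | single v b =>
      by_cases hv : FreeMonoid.toList v = []
      · have hv1 : v = 1 := FreeMonoid.toList.injective (by simpa using hv)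
        subst hv1
        rw [MonoidAlgebra.single_mul_single, mul_one, sinvMA_single, sinvMA_single, sinvMA_single]
        rw [show (FreeMonoid.toList (1:FreeMonoid ℕ)).getLast? = none from rfl]
        rw [if_neg (show ¬ (none : Option ℕ) = some k by simp), mul_zero, zero_add]
        rw [show (MonoidAlgebra.single (1:FreeMonoid ℕ) b : MA).coeff 1 = b by
            rw [MonoidAlgebra.coeff_single]; exact Finsupp.single_eq_same]
        split
        · rw [MonoidAlgebra.smul_single, smul_eq_mul, mul_comm]
        · rw [smul_zero]
      · rw [MonoidAlgebra.single_mul_single, sinvMA_single, sinvMA_single, sinvMA_single]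
        have h1 : (FreeMonoid.toList (u * v)).getLast? = (FreeMonoid.toList v).getLast? := by
          rw [FreeMonoid.toList_mul]
          exact List.getLast?_append_of_ne_nil _ hv
        have h2 : (FreeMonoid.toList (u * v)).dropLast
            = FreeMonoid.toList u ++ (FreeMonoid.toList v).dropLast := by
          rw [FreeMonoid.toList_mul]
          exact List.dropLast_append_of_ne_nil (l' := FreeMonoid.toList u) hv
        have h3 : (MonoidAlgebra.single v b : MA).coeff 1 = 0 := by
          rw [MonoidAlgebra.coeff_single]
          exact Finsupp.single_eq_of_ne' (fun h => hv (by rw [h]; rfl))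
        rw [h1, h2, h3, zero_smul, add_zero]
        split
        · rw [MonoidAlgebra.single_mul_single]
          congr 1
        · rw [mul_zero]

end Geo

namespace Geo

lemma Sinv_mul (k : ℕ) (x y : NSym) :
    Sinv k (x * y) = x * Sinv k y + ((toMA y).coeff 1) • Sinv k x := by
  rw [Sinv_def, Sinv_def, Sinv_def, map_mul, sinvMA_mul, map_add, map_mul,
    AlgEquiv.symm_apply_apply, map_zsmul]

lemma Sinv_one (k : ℕ) : Sinv k 1 = 0 := by
  rw [Sinv_def, map_one]
  rw [show (1 : MA) = MonoidAlgebra.single 1 1 from rfl, sinvMA_single]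
  rw [if_neg (show ¬ (FreeMonoid.toList (1:FreeMonoid ℕ)).getLast? = some k by
    rw [show (FreeMonoid.toList (1:FreeMonoid ℕ)).getLast? = none from rfl]; simp), map_zero]

lemma toMA_iota (j : ℕ) : toMA (FreeAlgebra.ι ℤ j) = MonoidAlgebra.single (FreeMonoid.of j) 1 := by
  show FreeAlgebra.equivMonoidAlgebraFreeMonoid (FreeAlgebra.ι ℤ j) = _
  rw [FreeAlgebra.equivMonoidAlgebraFreeMonoid]
  simp [FreeAlgebra.lift_ι_apply]

lemma Sinv_iota (k j : ℕ) : Sinv k (FreeAlgebra.ι ℤ j) = if j = k then 1 else 0 := by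
  rw [Sinv_def, toMA_iota, sinvMA_single]
  rw [show (FreeMonoid.toList (FreeMonoid.of j)).getLast? = some j from rfl]
  rw [show (FreeMonoid.toList (FreeMonoid.of j)).dropLast = [] from rfl]
  by_cases h : j = k
  · rw [if_pos (by rw [h]), if_pos h]
    show toMA.symm (1 : MA) = 1
    exact map_one _
  · rw [if_neg (by simpa using h), if_neg h, map_zero]

def SinvH (k : ℕ) : NSym →+ NSym where
  toFun := Sinv k
  map_zero' := Sinv_zero k
  map_add' := Sinv_add k

lemma eps_one : (toMA (1 : NSym)).coeff 1 = 1 := by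
  have h : toMA (1:NSym) = (1:MA) := map_one _
  rw [h]
  exact MonoidAlgebra.coeff_one_one

lemma eps_iota (j : ℕ) : (toMA (FreeAlgebra.ι ℤ j)).coeff 1 = 0 := by
  rw [toMA_iota, MonoidAlgebra.coeff_single]
  exact Finsupp.single_eq_of_ne' (by
    intro h
    have : FreeMonoid.toList (FreeMonoid.of j) = FreeMonoid.toList (1 : FreeMonoid ℕ) := by rw [h]
    simpa using this)

end Geo

namespace Geo

lemma fm_mul_eq_one {a b : FreeMonoid ℕ} (h : a * b = 1) : a = 1 ∧ b = 1 := by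
  have h2 := congrArg FreeMonoid.toList h
  rw [FreeMonoid.toList_mul, FreeMonoid.toList_one] at h2
  rw [List.append_eq_nil_iff] at h2
  constructor
  · exact FreeMonoid.toList.injective (by rw [h2.1, FreeMonoid.toList_one])
  · exact FreeMonoid.toList.injective (by rw [h2.2, FreeMonoid.toList_one])

lemma epsMA_mul (f g : MA) : (f * g).coeff 1 = f.coeff 1 * g.coeff 1 := by
  classical
  rw [MonoidAlgebra.coeff_mul]
  have step : ∀ a₁ : FreeMonoid ℕ, ∀ b₁ : ℤ,
      (g.coeff.sum fun a₂ b₂ => if a₁ * a₂ = 1 then b₁ * b₂ else 0)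
      = if a₁ = 1 then b₁ * g.coeff 1 else 0 := by
    intro a₁ b₁
    by_cases h : a₁ = 1
    · subst h
      rw [if_pos rfl]
      have e : ∀ a₂ : FreeMonoid ℕ, ∀ b₂ : ℤ,
          (if (1:FreeMonoid ℕ) * a₂ = 1 then b₁ * b₂ else 0)
          = if a₂ = 1 then b₁ * b₂ else 0 := by
        intro a₂ b₂; rw [one_mul]
      rw [Finsupp.sum_congr (g2 := fun a₂ b₂ => if a₂ = 1 then b₁ * b₂ else 0)
        (fun x _ => e x (g.coeff x))]
      rw [Finsupp.sum_ite_eq' g.coeff 1 (fun _ b₂ => b₁ * b₂)]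
      split
      · rfl
      · rw [Finsupp.notMem_support_iff.mp (by assumption), mul_zero]
    · rw [if_neg h]
      rw [Finsupp.sum]
      apply Finset.sum_eq_zero
      intro a₂ _
      rw [if_neg (fun hc => h (fm_mul_eq_one hc).1)]
  rw [Finsupp.sum_congr (g2 := fun a₁ b₁ => if a₁ = 1 then b₁ * g.coeff 1 else 0)
    (fun x _ => step x (f.coeff x))]
  rw [Finsupp.sum_ite_eq' f.coeff 1 (fun _ b₁ => b₁ * g.coeff 1)]
  split
  · rfl
  · rw [Finsupp.notMem_support_iff.mp (by assumption), zero_mul]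

end Geo

namespace Geo
open PowerSeries

def eps (x : NSym) : ℤ := (toMA x).coeff 1

lemma eps_mul' (x y : NSym) : eps (x * y) = eps x * eps y := by
  unfold eps
  rw [map_mul]
  exact epsMA_mul _ _

def epsH : NSym →+ ℤ where
  toFun := eps
  map_zero' := by unfold eps; rw [map_zero]; rfl
  map_add' := fun x y => by show (toMA (x+y)).coeff 1 = _; rw [map_add]; rfl

lemma eps_one' : eps (1 : NSym) = 1 := eps_one

lemma eps_iota' (j : ℕ) : eps (FreeAlgebra.ι ℤ j) = 0 := eps_iota j

def Dk (k : ℕ) (f : PowerSeries NSym) : PowerSeries NSym :=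
  PowerSeries.mk fun m => Sinv k (PowerSeries.coeff m f)

lemma coeff_Dk (k m : ℕ) (f : PowerSeries NSym) :
    PowerSeries.coeff m (Dk k f) = Sinv k (PowerSeries.coeff m f) :=
  PowerSeries.coeff_mk _ _

lemma Dk_one (k : ℕ) : Dk k 1 = 0 := by
  ext m
  rw [coeff_Dk, map_zero, PowerSeries.coeff_one]
  split
  · exact Sinv_one k
  · exact Sinv_zero k

lemma Sinv_mul' (k : ℕ) (x y : NSym) :
    Sinv k (x * y) = x * Sinv k y + (eps y) • Sinv k x := Sinv_mul k x y

lemma coeff_S (n m : ℕ) (hn : n ≠ 0) :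
    PowerSeries.coeff m (S n) = if m = n then FreeAlgebra.ι ℤ n else 0 := by
  rw [S, if_neg hn, PowerSeries.coeff_monomial]

lemma coeff_S_mul_zero {n p : ℕ} (hpn : p < n) (f : PowerSeries NSym) :
    PowerSeries.coeff p (S n * f) = 0 := by
  have hn : n ≠ 0 := by omega
  rw [PowerSeries.coeff_mul]
  apply Finset.sum_eq_zero
  rintro ⟨a, b⟩ hab
  rw [Finset.HasAntidiagonal.mem_antidiagonal] at hab
  rw [coeff_S _ _ hn, if_neg (by omega), zero_mul]

lemma eps_coeff_S_mul (n : ℕ) (hn : n ≠ 0) (f : PowerSeries NSym) (b : ℕ) :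
    eps (PowerSeries.coeff b (S n * f)) = 0 := by
  rw [PowerSeries.coeff_mul, show (eps : NSym → ℤ) = epsH from rfl, map_sum epsH]
  apply Finset.sum_eq_zero
  rintro ⟨p, q⟩ _
  show eps (PowerSeries.coeff p (S n) * PowerSeries.coeff q f) = 0
  rw [eps_mul', coeff_S _ _ hn]
  split
  · rw [eps_iota', zero_mul]
  · rw [show eps 0 = 0 from map_zero epsH, zero_mul]

end Geo

namespace Geo
open PowerSeries Finset

section WithG
variable (g : PowerSeries NSym)
variable (hg : ∀ m : ℕ, PowerSeries.coeff m g =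
      ∑ n ∈ Finset.range (m + 1), PowerSeries.coeff m (S n * g ^ n))

include hg

lemma coeff_zero_g : PowerSeries.coeff 0 g = 1 := by
  rw [hg 0]
  rw [Finset.sum_range_one]
  rw [show S 0 = 1 from if_pos rfl, pow_zero, one_mul, PowerSeries.coeff_zero_eq_constantCoeff]
  exact map_one _

lemma eps_coeff_g (b : ℕ) : eps (PowerSeries.coeff b g) = if b = 0 then 1 else 0 := by
  by_cases hb : b = 0
  · subst hb
    rw [coeff_zero_g g hg, if_pos rfl, eps_one']
  · rw [if_neg hb, hg b, show (eps : NSym → ℤ) = epsH from rfl, map_sum epsH]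
    apply Finset.sum_eq_zero
    intro n _
    by_cases hn : n = 0
    · subst hn
      rw [show S 0 = 1 from if_pos rfl, pow_zero, one_mul, PowerSeries.coeff_one, if_neg hb]
      exact map_zero epsH
    · exact eps_coeff_S_mul n hn _ b

lemma Dk_mul_g (k : ℕ) (f : PowerSeries NSym) :
    Dk k (f * g) = f * Dk k g + Dk k f := by
  ext m
  rw [map_add, coeff_Dk, PowerSeries.coeff_mul,
    show (Sinv k : NSym → NSym) = SinvH k from rfl, map_sum (SinvH k)]
  simp only [show ∀ x, SinvH k x = Sinv k x from fun _ => rfl]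
  have e1 : ∀ p : ℕ × ℕ, p ∈ Finset.HasAntidiagonal.antidiagonal m →
      Sinv k (PowerSeries.coeff p.1 f * PowerSeries.coeff p.2 g)
      = PowerSeries.coeff p.1 f * Sinv k (PowerSeries.coeff p.2 g)
        + (if p.2 = 0 then (1:ℤ) else 0) • Sinv k (PowerSeries.coeff p.1 f) := by
    intro p _
    rw [Sinv_mul' k, eps_coeff_g g hg]
  rw [Finset.sum_congr rfl e1, Finset.sum_add_distrib]
  congr 1
  · rw [PowerSeries.coeff_mul]
    apply Finset.sum_congr rfl
    intro p _
    rw [coeff_Dk]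
  · rw [coeff_Dk]
    rw [Finset.sum_eq_single ((m, 0) : ℕ × ℕ)]
    · rw [if_pos rfl, one_smul]
    · rintro ⟨a, b⟩ hab hne
      rw [Finset.HasAntidiagonal.mem_antidiagonal] at hab
      rw [if_neg (by rintro rfl; exact hne (by simp at hab ⊢; omega)), zero_smul]
    · intro h
      exact absurd (Finset.HasAntidiagonal.mem_antidiagonal.mpr (by omega)) h

lemma Dk_mul_gpow (k : ℕ) (n : ℕ) (f : PowerSeries NSym) :
    Dk k (f * g ^ n) = f * ((∑ i ∈ Finset.range n, g ^ i) * Dk k g) + Dk k f := by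
  induction n generalizing f with
  | zero =>
      rw [pow_zero, mul_one, Finset.range_zero, Finset.sum_empty, zero_mul, mul_zero, zero_add]
  | succ n ih =>
      rw [pow_succ, ← mul_assoc, Dk_mul_g g hg, ih f, Finset.sum_range_succ, add_mul, mul_add,
        mul_assoc]
      abel

end WithG
end Geo

namespace Geo
open PowerSeries Finset

lemma Dk_S (k n : ℕ) (hn : n ≠ 0) :
    Dk k (S n) = if n = k then (PowerSeries.X : PowerSeries NSym) ^ k else 0 := by
  ext m
  rw [coeff_Dk, coeff_S _ _ hn]
  by_cases h : n = k
  · subst h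
    rw [if_pos rfl, PowerSeries.coeff_X_pow]
    by_cases hm : m = n
    · rw [if_pos hm, if_pos hm, Sinv_iota, if_pos rfl]
    · rw [if_neg hm, if_neg hm, Sinv_zero]
  · rw [if_neg h, map_zero]
    by_cases hm : m = n
    · rw [if_pos hm, Sinv_iota, if_neg h]
    · rw [if_neg hm, Sinv_zero]

section WithG2
variable (g : PowerSeries NSym)
variable (hg : ∀ m : ℕ, PowerSeries.coeff m g =
      ∑ n ∈ Finset.range (m + 1), PowerSeries.coeff m (S n * g ^ n))

/-- The series `A = ∑_{n≥1} S_n (1 + g + ⋯ + g^{n-1})`. -/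
def Aser : PowerSeries NSym :=
  PowerSeries.mk fun p => ∑ n ∈ Finset.range (p + 1),
    PowerSeries.coeff p (S n * (∑ i ∈ Finset.range n, g ^ i))

lemma coeff_Aser (p : ℕ) : PowerSeries.coeff p (Aser g)
    = ∑ n ∈ Finset.range (p + 1),
      PowerSeries.coeff p (S n * (∑ i ∈ Finset.range n, g ^ i)) :=
  PowerSeries.coeff_mk _ _

lemma coeff_zero_Aser : PowerSeries.coeff 0 (Aser g) = 0 := by
  rw [coeff_Aser, Finset.sum_range_one, show S 0 = 1 from if_pos rfl,
    Finset.range_zero, Finset.sum_empty, mul_zero, map_zero]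

include hg in
lemma Hk_eq (k : ℕ) (hk : 1 ≤ k) :
    Dk k g = (PowerSeries.X : PowerSeries NSym) ^ k + Aser g * Dk k g := by
  ext m
  rw [coeff_Dk, hg m, show (Sinv k : NSym → NSym) = SinvH k from rfl, map_sum (SinvH k)]
  simp only [show ∀ x, SinvH k x = Sinv k x from fun _ => rfl]
  have e1 : ∀ n ∈ Finset.range (m+1),
      Sinv k (PowerSeries.coeff m (S n * g ^ n))
      = PowerSeries.coeff m ((S n * (∑ i ∈ Finset.range n, g ^ i)) * Dk k g)
        + (if n = k then PowerSeries.coeff m ((PowerSeries.X : PowerSeries NSym)^k)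
           else 0) := by
    intro n _
    by_cases hn : n = 0
    · subst hn
      rw [show S 0 = 1 from if_pos rfl, pow_zero, mul_one, Finset.range_zero,
        Finset.sum_empty, mul_zero, zero_mul, map_zero, if_neg (by omega), add_zero]
      rw [PowerSeries.coeff_one]
      split
      · exact Sinv_one k
      · exact Sinv_zero k
    · rw [← coeff_Dk, Dk_mul_gpow g hg k n (S n), map_add, Dk_S k n hn, ← mul_assoc]
      congr 1
      rw [apply_ite (PowerSeries.coeff m), map_zero]
  rw [Finset.sum_congr rfl e1, Finset.sum_add_distrib, map_add]
  rw [add_comm]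
  congr 1
  · -- ∑ n, ite (n=k) (coeff m X^k) 0 = coeff m X^k
    rw [Finset.sum_ite_eq' (Finset.range (m+1)) k
      (fun _ => PowerSeries.coeff m ((PowerSeries.X : PowerSeries NSym)^k))]
    split
    · rfl
    · rw [PowerSeries.coeff_X_pow, if_neg (by
        rename_i hc
        rw [Finset.mem_range] at hc
        omega)]
  · -- ∑ n, coeff m ((S n * B n) * Dk k g) = coeff m (Aser g * Dk k g)
    rw [PowerSeries.coeff_mul]
    have e2 : ∀ n ∈ Finset.range (m+1),
        PowerSeries.coeff m ((S n * (∑ i ∈ Finset.range n, g ^ i)) * Dk k g)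
        = ∑ pq ∈ Finset.HasAntidiagonal.antidiagonal m,
            PowerSeries.coeff pq.1 (S n * (∑ i ∈ Finset.range n, g ^ i))
            * PowerSeries.coeff pq.2 (Dk k g) := fun n _ => PowerSeries.coeff_mul _ _ _
    rw [Finset.sum_congr rfl e2, Finset.sum_comm]
    apply Finset.sum_congr rfl
    rintro ⟨p, q⟩ hpq
    rw [Finset.HasAntidiagonal.mem_antidiagonal] at hpq
    rw [coeff_Aser, Finset.sum_mul]
    refine (Finset.sum_subset (Finset.range_subset_range.mpr (by omega : p + 1 ≤ m + 1)) ?_).symm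
    intro n _ hn
    rw [Finset.mem_range, not_lt] at hn
    rw [coeff_S_mul_zero (by omega : p < n), zero_mul]

end WithG2
end Geo

namespace Geo
open PowerSeries Finset

lemma fixpoint_unique (A C F G : PowerSeries NSym) (hA : PowerSeries.coeff 0 A = 0)
    (hF : F = C + A * F) (hG : G = C + A * G) : F = G := by
  ext m
  induction m using Nat.strong_induction_on with
  | _ m ih =>
    rw [hF, hG, map_add, map_add, PowerSeries.coeff_mul, PowerSeries.coeff_mul]
    congr 1
    apply Finset.sum_congr rfl
    rintro ⟨p, q⟩ hpq
    rw [Finset.HasAntidiagonal.mem_antidiagonal] at hpq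
    by_cases hp : p = 0
    · subst hp
      rw [hA, zero_mul, zero_mul]
    · rw [ih q (by omega)]

end Geo



/-- For every `n ≥ 1` and `k ≥ 1`, applying the operator `S_k^{-1}`
(deleting a final letter `S_k`) to the degree-`(n+k)` component of the noncommutative
Lagrange series `g = ∑_{n≥0} S_n g^n` gives the same degree-`n` element, independently
of `k`: `g_{n+k} S_k^{-1} = g_{n+1} S_1^{-1}`. -/
theorem geode_independence
    (g : PowerSeries NSym)
    (hg : ∀ m : ℕ, PowerSeries.coeff m g =
      ∑ n ∈ Finset.range (m + 1), PowerSeries.coeff m (S n * g ^ n)) :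
    ∀ n k : ℕ, 1 ≤ n → 1 ≤ k →
      Sinv k (PowerSeries.coeff (n + k) g) = Sinv 1 (PowerSeries.coeff (n + 1) g) := by
  intro n k _ hk
  have h1 : Geo.Dk 1 g = (PowerSeries.X : PowerSeries NSym)^1 + Geo.Aser g * Geo.Dk 1 g :=
    Geo.Hk_eq g hg 1 le_rfl
  have hkk : Geo.Dk k g = (PowerSeries.X : PowerSeries NSym)^k + Geo.Aser g * Geo.Dk k g :=
    Geo.Hk_eq g hg k hk
  have hc : (PowerSeries.X : PowerSeries NSym)^(k-1) * Geo.Aser g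
      = Geo.Aser g * (PowerSeries.X : PowerSeries NSym)^(k-1) :=
    (((PowerSeries.commute_X (Geo.Aser g)).pow_right (k-1)).symm).eq
  have h2 : (PowerSeries.X : PowerSeries NSym)^(k-1) * Geo.Dk 1 g
      = (PowerSeries.X : PowerSeries NSym)^k
        + Geo.Aser g * ((PowerSeries.X : PowerSeries NSym)^(k-1) * Geo.Dk 1 g) := by
    calc (PowerSeries.X : PowerSeries NSym)^(k-1) * Geo.Dk 1 g
        = (PowerSeries.X : PowerSeries NSym)^(k-1)
          * ((PowerSeries.X : PowerSeries NSym)^1 + Geo.Aser g * Geo.Dk 1 g) := by rw [← h1]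
      _ = (PowerSeries.X : PowerSeries NSym)^(k-1) * (PowerSeries.X : PowerSeries NSym)^1
          + (PowerSeries.X : PowerSeries NSym)^(k-1) * (Geo.Aser g * Geo.Dk 1 g) := by
            rw [mul_add]
      _ = (PowerSeries.X : PowerSeries NSym)^k
          + Geo.Aser g * ((PowerSeries.X : PowerSeries NSym)^(k-1) * Geo.Dk 1 g) := by
            rw [← pow_add, show k - 1 + 1 = k by omega, ← mul_assoc, hc, mul_assoc]
  have hfg : Geo.Dk k g = (PowerSeries.X : PowerSeries NSym)^(k-1) * Geo.Dk 1 g :=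
    Geo.fixpoint_unique (Geo.Aser g) ((PowerSeries.X : PowerSeries NSym)^k) _ _
      (Geo.coeff_zero_Aser g) hkk h2
  have : PowerSeries.coeff (n + k) (Geo.Dk k g)
      = PowerSeries.coeff (n + 1) (Geo.Dk 1 g) := by
    rw [hfg, show n + k = (n + 1) + (k - 1) by omega, PowerSeries.coeff_X_pow_mul]
  rw [Geo.coeff_Dk, Geo.coeff_Dk] at this
  exact this


end
end
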